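/- The line x + 3y = 0 (the line T4 through p_0 = [0:0:1] and p_4 = [-3:1:1]) is tangent to the branches of C7 at p_4 in the following sense: C7 vanishes to order exactly 2 at [-3:1:1], and the quadratic part of C7 dehomogenized and translated to put [-3:1:1] at the origin is a perfect square proportional to (x + 3y)², i.e., the tangent cone of C7 at p_4 is the double line x + 3y = 0 (in translated coordinates, the double of the direction of T4). -/
import Mathlib

open MvPolynomial

/-- The dehomogenization at z = 1 of the septic C7, in ℚ[x,y]. -/
noncomputable def c7 : MvPolynomial (Fin 2) ℚ :=
  8683464 * X 0 ^ 6 * X 1 - 494984955 * X 0 ^ 4 * X 1 ^ 3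
    - 1064093674 * X 0 ^ 2 * X 1 ^ 5 - 558251235 * X 1 ^ 7
    - 11358312 * X 0 ^ 6 + 1253331746 * X 0 ^ 4 * X 1 ^ 2
    + 8340957732 * X 0 ^ 2 * X 1 ^ 4 + 7286240034 * X 1 ^ 6
    - 920312219 * X 0 ^ 4 * X 1 - 17394911410 * X 0 ^ 2 * X 1 ^ 3
    - 32292289971 * X 1 ^ 5 + 179839940 * X 0 ^ 4
    + 11716330200 * X 0 ^ 2 * X 1 ^ 2 + 55580514660 * X 1 ^ 4
    - 1270036000 * X 0 ^ 2 * X 1 - 32468306400 * X 1 ^ 3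

/-- c7 translated so that the point (-3, 1) (i.e. [-3:1:1]) sits at the origin:
g(x, y) = c7(x - 3, y + 1). -/
noncomputable def gC7 : MvPolynomial (Fin 2) ℚ :=
  aeval ![X 0 - 3, X 1 + 1] c7

lemma homo_term (a : ℚ) (i j d : ℕ) (h : i + j = d) :
    (C a * X 0 ^ i * X (1 : Fin 2) ^ j).IsHomogeneous d :=
  h ▸ (isHomogeneous_C_mul_X_pow a 0 i).mul (isHomogeneous_X_pow 1 j)

noncomputable def h2C7 : MvPolynomial (Fin 2) ℚ :=
  C (-1956469824) * (X 0 + 3 * X 1) ^ 2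

lemma hh2C7 : (h2C7).IsHomogeneous 2 := by
  have h1 : ((X 0 + 3 * X 1 : MvPolynomial (Fin 2) ℚ)).IsHomogeneous 1 := by
    rw [show (3 : MvPolynomial (Fin 2) ℚ) = C 3 from (map_ofNat C 3).symm]
    exact (isHomogeneous_X _ _).add (isHomogeneous_C_mul_X 3 1)
  unfold h2C7
  have h2 : ((X 0 + 3 * X 1 : MvPolynomial (Fin 2) ℚ) ^ 2).IsHomogeneous 2 := by
    simpa using h1.pow 2
  exact h2.C_mul (-1956469824)


noncomputable def h3C7 : MvPolynomial (Fin 2) ℚ :=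
  C (974923632) * X 0 ^ 0 * X 1 ^ 3
  + C (31396863120) * X 0 ^ 1 * X 1 ^ 2
  + C (14047067520) * X 0 ^ 2 * X 1 ^ 1
  + C (1229923776) * X 0 ^ 3 * X 1 ^ 0
noncomputable def h4C7 : MvPolynomial (Fin 2) ℚ :=
  C (11058276348) * X 0 ^ 0 * X 1 ^ 4
  + C (21490478472) * X 0 ^ 1 * X 1 ^ 3
  + C (-13571242804) * X 0 ^ 2 * X 1 ^ 2
  + C (-5905827456) * X 0 ^ 3 * X 1 ^ 1
  + C (-343229968) * X 0 ^ 4 * X 1 ^ 0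
noncomputable def h5C7 : MvPolynomial (Fin 2) ℚ :=
  C (-9874968768) * X 0 ^ 0 * X 1 ^ 5
  + C (-18122936172) * X 0 ^ 1 * X 1 ^ 4
  + C (-21401204792) * X 0 ^ 2 * X 1 ^ 3
  + C (2779477428) * X 0 ^ 3 * X 1 ^ 2
  + C (1273664048) * X 0 ^ 4 * X 1 ^ 1
  + C (48147264) * X 0 ^ 5 * X 1 ^ 0
noncomputable def h6C7 : MvPolynomial (Fin 2) ℚ :=
  C (3378481389) * X 0 ^ 0 * X 1 ^ 6
  + C (6384562044) * X 0 ^ 1 * X 1 ^ 5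
  + C (3020489362) * X 0 ^ 2 * X 1 ^ 4
  + C (5939819460) * X 0 ^ 3 * X 1 ^ 3
  + C (-231623119) * X 0 ^ 4 * X 1 ^ 2
  + C (-156302352) * X 0 ^ 5 * X 1 ^ 1
  + C (-2674848) * X 0 ^ 6 * X 1 ^ 0
noncomputable def h7C7 : MvPolynomial (Fin 2) ℚ :=
  C (-558251235) * X 0 ^ 0 * X 1 ^ 7
  + C (-1064093674) * X 0 ^ 2 * X 1 ^ 5
  + C (-494984955) * X 0 ^ 4 * X 1 ^ 3
  + C (8683464) * X 0 ^ 6 * X 1 ^ 1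


lemma hh3C7 : (h3C7).IsHomogeneous 3 := by
  unfold h3C7
  repeat' apply MvPolynomial.IsHomogeneous.add
  all_goals exact homo_term _ _ _ _ (by norm_num)
lemma hh4C7 : (h4C7).IsHomogeneous 4 := by
  unfold h4C7
  repeat' apply MvPolynomial.IsHomogeneous.add
  all_goals exact homo_term _ _ _ _ (by norm_num)
lemma hh5C7 : (h5C7).IsHomogeneous 5 := by
  unfold h5C7
  repeat' apply MvPolynomial.IsHomogeneous.add
  all_goals exact homo_term _ _ _ _ (by norm_num)
lemma hh6C7 : (h6C7).IsHomogeneous 6 := by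
  unfold h6C7
  repeat' apply MvPolynomial.IsHomogeneous.add
  all_goals exact homo_term _ _ _ _ (by norm_num)
lemma hh7C7 : (h7C7).IsHomogeneous 7 := by
  unfold h7C7
  repeat' apply MvPolynomial.IsHomogeneous.add
  all_goals exact homo_term _ _ _ _ (by norm_num)

lemma keyC7 : gC7 = h2C7 + h3C7 + h4C7 + h5C7 + h6C7 + h7C7 := by
  simp only [gC7, c7, h2C7, h3C7, h4C7, h5C7, h6C7, h7C7, map_add, map_sub, map_mul, map_pow,
    map_ofNat, aeval_X, Matrix.cons_val_zero, Matrix.cons_val_one, Matrix.head_cons]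
  simp only [map_neg, map_ofNat]
  ring

lemma compC7 (n : ℕ) : homogeneousComponent n gC7 =
    (if n = 2 then h2C7 else 0) + (if n = 3 then h3C7 else 0) + (if n = 4 then h4C7 else 0)
    + (if n = 5 then h5C7 else 0) + (if n = 6 then h6C7 else 0) + (if n = 7 then h7C7 else 0) := by
  rw [keyC7]
  simp only [map_add]
  rw [homogeneousComponent_of_mem ((mem_homogeneousSubmodule _ _).2 hh2C7),
    homogeneousComponent_of_mem ((mem_homogeneousSubmodule _ _).2 hh3C7),
    homogeneousComponent_of_mem ((mem_homogeneousSubmodule _ _).2 hh4C7),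
    homogeneousComponent_of_mem ((mem_homogeneousSubmodule _ _).2 hh5C7),
    homogeneousComponent_of_mem ((mem_homogeneousSubmodule _ _).2 hh6C7),
    homogeneousComponent_of_mem ((mem_homogeneousSubmodule _ _).2 hh7C7)]

/-- C7 vanishes to order exactly 2 at [-3:1:1], and its tangent cone there is the
double line in the direction of T4 = {x + 3y = 0}: the translated polynomial has
zero constant and linear parts, and its quadratic part is a nonzero constant
times (x + 3y)². -/
theorem stmt17 :
    homogeneousComponent 0 gC7 = 0 ∧
    homogeneousComponent 1 gC7 = 0 ∧
    ∃ c : ℚ, c ≠ 0 ∧ homogeneousComponent 2 gC7 = C c * (X 0 + 3 * X 1) ^ 2 := by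
  refine ⟨?_, ?_, -1956469824, by norm_num, ?_⟩
  · rw [compC7 0]; norm_num
  · rw [compC7 1]; norm_num
  · rw [compC7 2]; norm_num [h2C7]
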